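/- For any finite digraph D, the iterated coreset digraph sequence Yⁿ(D) is eventually constant: there exists N such that Yⁿ(D) = Y^N(D) for all n ≥ N; moreover if Y(D) ≠ D then Y(D) has strictly fewer vertices than D. -/
import Mathlib


variable {V : Type*}

/-- Successor set: vertices with a predecessor in `S`. -/
def succSet (E : V → V → Prop) (S : Set V) : Set V := {v | ∃ u ∈ S, E u v}

/-- Predecessor set: vertices with a successor in `S`. -/
def predSet (E : V → V → Prop) (S : Set V) : Set V := {u | ∃ v ∈ S, E u v}

/-- A nontrivial coreset: a minimal nonempty set `U` with `β(α(U)) = U`. -/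
def IsCoreset (E : V → V → Prop) (U : Set V) : Prop :=
  U.Nonempty ∧ predSet E (succSet E U) = U ∧
    ∀ U' ⊆ U, U'.Nonempty → predSet E (succSet E U') = U' → U' = U

/-- The set of all sinks (the trivial coreset). -/
def sinks (E : V → V → Prop) : Set V := {v | ∀ w, ¬ E v w}

/-- The set of all sources. -/
def sources (E : V → V → Prop) : Set V := {v | ∀ u, ¬ E u v}

/-- A coreset: the trivial coreset (all sinks) or a nontrivial coreset. -/
def IsCoresetGen (E : V → V → Prop) (U : Set V) : Prop :=
  U = sinks E ∨ IsCoreset E U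

/-- A bundled finite digraph. -/
structure FinDigraph : Type 1 where
  V : Type
  finite : Finite V
  E : V → V → Prop

/-- The coreset digraph `Y(D)`: vertices are the nonempty coresets of `D`, with an
edge from `U` to `W` iff `α(U) ∩ W ≠ ∅`. -/
def Y (D : FinDigraph) : FinDigraph where
  V := {U : Set D.V // IsCoresetGen D.E U ∧ U.Nonempty}
  finite := by
    have := D.finite
    exact Subtype.finite
  E := fun U W => (succSet D.E U.val ∩ W.val).Nonempty

/-- Isomorphism of bundled digraphs. -/
def FinDigraph.Iso (D₁ D₂ : FinDigraph) : Prop :=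
  ∃ e : D₁.V ≃ D₂.V, ∀ u v, D₁.E u v ↔ D₂.E (e u) (e v)


section Aux

variable {E : V → V → Prop}

lemma coreset_out_edge {U : Set V} (hU : IsCoreset E U) {u : V} (hu : u ∈ U) :
    ∃ v, E u v := by
  have h := hU.2.1
  rw [← h] at hu
  obtain ⟨v, _, hv⟩ := hu
  exact ⟨v, hv⟩

lemma subset_ba_of_subset_coreset {U S : Set V} (hU : IsCoreset E U) (hS : S ⊆ U) :
    S ⊆ predSet E (succSet E S) := by
  intro u hu
  obtain ⟨v, hv⟩ := coreset_out_edge hU (hS hu)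
  exact ⟨v, ⟨u, hu, hv⟩, hv⟩

lemma succSet_mono {S T : Set V} (h : S ⊆ T) : succSet E S ⊆ succSet E T := by
  rintro v ⟨u, hu, huv⟩; exact ⟨u, h hu, huv⟩

lemma predSet_mono {S T : Set V} (h : S ⊆ T) : predSet E S ⊆ predSet E T := by
  rintro u ⟨v, hv, huv⟩; exact ⟨v, h hv, huv⟩

lemma coreset_eq_of_inter_nonempty {U W : Set V} (hU : IsCoreset E U) (hW : IsCoreset E W)
    (h : (U ∩ W).Nonempty) : U = W := by
  set S := U ∩ W with hSdef
  have hba : predSet E (succSet E S) = S := by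
    apply Set.Subset.antisymm
    · intro u hu
      constructor
      · have : u ∈ predSet E (succSet E U) :=
          predSet_mono (succSet_mono Set.inter_subset_left) hu
        rwa [hU.2.1] at this
      · have : u ∈ predSet E (succSet E W) :=
          predSet_mono (succSet_mono Set.inter_subset_right) hu
        rwa [hW.2.1] at this
    · exact subset_ba_of_subset_coreset hU Set.inter_subset_left
  have h1 : S = U := hU.2.2 S Set.inter_subset_left h hba
  have h2 : S = W := hW.2.2 S Set.inter_subset_right h hba
  rw [← h1, h2]

lemma coresetGen_disjoint {U W : Set V} (hU : IsCoresetGen E U) (hW : IsCoresetGen E W)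
    (hne : U ≠ W) : Disjoint U W := by
  rw [Set.disjoint_iff_inter_eq_empty]
  by_contra h
  have hne' : (U ∩ W).Nonempty := Set.nonempty_iff_ne_empty.mpr h
  obtain ⟨x, hxU, hxW⟩ := hne'
  rcases hU with hU | hU <;> rcases hW with hW | hW
  · exact hne (hU.trans hW.symm)
  · obtain ⟨v, hv⟩ := coreset_out_edge hW hxW
    exact (hU ▸ hxU) v hv
  · obtain ⟨v, hv⟩ := coreset_out_edge hU hxU
    exact (hW ▸ hxW) v hv
  · exact hne (coreset_eq_of_inter_nonempty hU hW ⟨x, hxU, hxW⟩)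

end Aux

/-- A representative element of each coreset. -/
noncomputable def Yrep (D : FinDigraph) (U : (Y D).V) : D.V := U.2.2.some

lemma Yrep_mem (D : FinDigraph) (U : (Y D).V) : Yrep D U ∈ U.val := U.2.2.some_mem

lemma Yrep_injective (D : FinDigraph) : Function.Injective (Yrep D) := by
  intro U W h
  by_contra hne
  have hval : U.val ≠ W.val := fun hv => hne (Subtype.ext hv)
  have hd := coresetGen_disjoint U.2.1 W.2.1 hval
  exact (Set.disjoint_iff_inter_eq_empty.mp hd ▸
    (Set.mem_inter (Yrep_mem D U) (h ▸ Yrep_mem D W)) : Yrep D U ∈ (∅ : Set D.V))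

lemma Ycard_le (D : FinDigraph) : Nat.card (Y D).V ≤ Nat.card D.V := by
  have := D.finite
  exact Nat.card_le_card_of_injective (Yrep D) (Yrep_injective D)

lemma Yiso_of_card_eq (D : FinDigraph) (h : Nat.card (Y D).V = Nat.card D.V) :
    FinDigraph.Iso (Y D) D := by
  have hfin := D.finite
  have hbij : Function.Bijective (Yrep D) :=
    (Nat.bijective_iff_injective_and_card (Yrep D)).mpr ⟨Yrep_injective D, h⟩
  -- each coreset is a singleton
  have hsingle : ∀ U : (Y D).V, U.val = {Yrep D U} := by
    intro U
    apply Set.Subset.antisymm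
    · intro x hx
      obtain ⟨W, hW⟩ := hbij.2 x
      have : W = U := by
        by_contra hne
        have hval : W.val ≠ U.val := fun hv => hne (Subtype.ext hv)
        have hd := coresetGen_disjoint W.2.1 U.2.1 hval
        have : x ∈ W.val ∩ U.val := ⟨hW ▸ Yrep_mem D W, hx⟩
        rw [Set.disjoint_iff_inter_eq_empty.mp hd] at this
        exact this
      rw [← hW, this]
      rfl
    · intro x hx
      rw [Set.mem_singleton_iff] at hx
      exact hx ▸ Yrep_mem D U
  refine ⟨Equiv.ofBijective (Yrep D) hbij, fun U W => ?_⟩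
  show (succSet D.E U.val ∩ W.val).Nonempty ↔ D.E (Yrep D U) (Yrep D W)
  rw [hsingle U, hsingle W]
  constructor
  · rintro ⟨v, ⟨u, hu, huv⟩, hvW⟩
    rw [Set.mem_singleton_iff] at hu hvW
    rw [← hu, ← hvW]
    exact huv
  · intro h
    exact ⟨Yrep D W, ⟨Yrep D U, rfl, h⟩, rfl⟩

lemma Iso.refl (D : FinDigraph) : FinDigraph.Iso D D :=
  ⟨Equiv.refl _, fun _ _ => Iff.rfl⟩

lemma Iso.trans {D₁ D₂ D₃ : FinDigraph} (h₁ : FinDigraph.Iso D₁ D₂)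
    (h₂ : FinDigraph.Iso D₂ D₃) : FinDigraph.Iso D₁ D₃ := by
  obtain ⟨e₁, he₁⟩ := h₁
  obtain ⟨e₂, he₂⟩ := h₂
  exact ⟨e₁.trans e₂, fun u v => (he₁ u v).trans (he₂ (e₁ u) (e₁ v))⟩

/-- The sequence `Yⁿ(D)` is eventually constant (up to isomorphism), and if
`Y(D) ≠ D` then `Y(D)` has strictly fewer vertices than `D`. -/
theorem stmt19 (D : FinDigraph) :
    (∃ N : ℕ, ∀ n ≥ N, FinDigraph.Iso (Y^[n] D) (Y^[N] D)) ∧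
    (¬ FinDigraph.Iso (Y D) D → Nat.card (Y D).V < Nat.card D.V) := by
  constructor
  · set g : ℕ → ℕ := fun n => Nat.card ((Y^[n] D).V) with hg
    have hstep : ∀ n, g (n + 1) ≤ g n := by
      intro n
      have : Y^[n + 1] D = Y (Y^[n] D) := Function.iterate_succ_apply' Y n D
      simp only [hg, this]
      exact Ycard_le _
    have hanti : ∀ m n, m ≤ n → g n ≤ g m := by
      intro m n hmn
      induction n with
      | zero => simp only [Nat.le_zero] at hmn; rw [hmn]
      | succ k ih =>
        rcases Nat.lt_or_ge m (k+1) with h | h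
        · exact (hstep k).trans (ih (Nat.lt_succ_iff.mp h))
        · have : m = k + 1 := le_antisymm hmn h
          rw [this]
    obtain ⟨N, hN⟩ := Nat.sInf_mem (Set.range_nonempty g)
    have hmin : ∀ n, g N ≤ g n := fun n => hN ▸ Nat.sInf_le ⟨n, rfl⟩
    refine ⟨N, fun n hn => ?_⟩
    induction n with
    | zero =>
      have : N = 0 := Nat.le_zero.mp hn
      rw [this]; exact Iso.refl _
    | succ k ih =>
      rcases Nat.lt_or_ge N (k+1) with h | h
      · have hk : N ≤ k := Nat.lt_succ_iff.mp h
        have hcard : Nat.card ((Y^[k+1] D).V) = Nat.card ((Y^[k] D).V) :=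
          le_antisymm (hstep k) ((hanti N k hk).trans (hmin (k+1)))
        have heq : Y^[k + 1] D = Y (Y^[k] D) := Function.iterate_succ_apply' Y k D
        have hiso : FinDigraph.Iso (Y^[k+1] D) (Y^[k] D) := by
          rw [heq]
          rw [heq] at hcard
          exact Yiso_of_card_eq _ hcard
        exact Iso.trans hiso (ih hk)
      · have : N = k + 1 := le_antisymm hn h
        rw [← this]; exact Iso.refl _
  · intro hniso
    rcases lt_or_eq_of_le (Ycard_le D) with h | h
    · exact h
    · exact absurd (Yiso_of_card_eq D h) hniso
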